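/- If reduced words u, v, x satisfy [u·v] ≈ u·x (the non-splitting reduct of u·v equals u concatenated with x), then x is a final subword of v; in particular x commutes with every word that commutes with v. -/

import Mathlib

variable {V : Type*} [DecidableEq V] [Fintype V]

/-- A letter is a nonempty connected subset of the graph `G`
(connectedness of the induced subgraph includes nonemptiness). -/
def IsLetter (G : SimpleGraph V) (s : Finset V) : Prop :=
  (G.induce (↑s : Set V)).Connected

/-- The type of letters of `G`. -/
def Letter (G : SimpleGraph V) := {s : Finset V // IsLetter G s}

/-- A word is a finite sequence of letters. -/
abbrev Word (G : SimpleGraph V) := List (Letter G)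

/-- Two letters commute iff their union is not a letter (is disconnected). -/
def LCommute (G : SimpleGraph V) (s t : Letter G) : Prop :=
  ¬ IsLetter G (s.1 ∪ t.1)

/-- Two words commute if their letters pairwise commute. -/
def WCommute (G : SimpleGraph V) (u v : Word G) : Prop :=
  ∀ s ∈ u, ∀ t ∈ v, LCommute G s t

/-- One swap of two adjacent commuting letters. -/
def LSwapStep (G : SimpleGraph V) (w w' : Word G) : Prop :=
  ∃ (a b : Word G) (s t : Letter G), LCommute G s t ∧
    w = a ++ s :: t :: b ∧ w' = a ++ t :: s :: b

/-- Equivalence (`≈`) of words: sequences of swaps of adjacent commuting letters. -/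
def WEquiv (G : SimpleGraph V) : Word G → Word G → Prop :=
  Relation.ReflTransGen (LSwapStep G)

/-- A word is reduced if there is no pair of comparable letters such that the
smaller one commutes with all letters strictly in between. -/
def WIsReduced (G : SimpleGraph V) (w : Word G) : Prop :=
  ¬ ∃ (a b c : Word G) (s t : Letter G),
      w = a ++ s :: (b ++ t :: c) ∧
      ((s.1 ⊆ t.1 ∧ ∀ r ∈ b, LCommute G s r) ∨
       (t.1 ⊆ s.1 ∧ ∀ r ∈ b, LCommute G t r))

/-- A splitting of a letter `s`: a (possibly empty) word whose letters are
proper subsets of `s`. -/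
def IsSplitting (G : SimpleGraph V) (x : Word G) (s : Letter G) : Prop :=
  ∀ t ∈ x, t.1 ⊂ s.1

/-- `SplitStep G u v`: `u` is obtained from `v` by replacing one occurrence of a
letter by a splitting of it. -/
def SplitStep (G : SimpleGraph V) (u v : Word G) : Prop :=
  ∃ (a b x : Word G) (s : Letter G),
    v = a ++ s :: b ∧ IsSplitting G x s ∧ u = a ++ x ++ b

/-- One step of the splitting order up to equivalence. -/
def PrecStep (G : SimpleGraph V) (u v : Word G) : Prop :=
  ∃ u' v', WEquiv G v v' ∧ SplitStep G u' v' ∧ WEquiv G u u'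

/-- The splitting order `≺` on words. -/
def WPrec (G : SimpleGraph V) : Word G → Word G → Prop :=
  Relation.TransGen (PrecStep G)

/-- `u ≼ v` : `u ≺ v` or `u ≈ v`. -/
def WPreceq (G : SimpleGraph V) (u v : Word G) : Prop :=
  WPrec G u v ∨ WEquiv G u v

/-- Absorption: if `s ⊆ t`, replace a subword `s·t` (or `t·s`) by `t`. -/
def AbsorbStep (G : SimpleGraph V) (w w' : Word G) : Prop :=
  ∃ (a b : Word G) (s t : Letter G), s.1 ⊆ t.1 ∧
    (w = a ++ s :: t :: b ∨ w = a ++ t :: s :: b) ∧ w' = a ++ t :: b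

/-- A non-splitting reduction step: Commutation or Absorption. -/
def NSStep (G : SimpleGraph V) (w w' : Word G) : Prop :=
  LSwapStep G w w' ∨ AbsorbStep G w w'

/-- `NSRed G u v`: `v` is a non-splitting reduction of `u`, i.e. a reduced word
obtained from `u` by Commutation and Absorption steps only. -/
def NSRed (G : SimpleGraph V) (u v : Word G) : Prop :=
  Relation.ReflTransGen (NSStep G) u v ∧ WIsReduced G v

/-- The letter `t` is left-absorbed by the word `w`: `t` is contained in some
letter of `w` and commutes with all earlier letters. -/
def LetterLeftAbsorbed (G : SimpleGraph V) (t : Letter G) (w : Word G) : Prop :=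
  ∃ (a b : Word G) (s : Letter G), w = a ++ s :: b ∧ t.1 ⊆ s.1 ∧ ∀ r ∈ a, LCommute G t r

/-- The letter `t` is right-absorbed by the word `w`. -/
def LetterRightAbsorbed (G : SimpleGraph V) (t : Letter G) (w : Word G) : Prop :=
  ∃ (a b : Word G) (s : Letter G), w = a ++ s :: b ∧ t.1 ⊆ s.1 ∧ ∀ r ∈ b, LCommute G t r

/-- The letter `t` is properly left-absorbed by the word `w`. -/
def LetterProperLeftAbsorbed (G : SimpleGraph V) (t : Letter G) (w : Word G) : Prop :=
  ∃ (a b : Word G) (s : Letter G), w = a ++ s :: b ∧ t.1 ⊂ s.1 ∧ ∀ r ∈ a, LCommute G t r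

/-- The letter `t` is properly right-absorbed by the word `w`. -/
def LetterProperRightAbsorbed (G : SimpleGraph V) (t : Letter G) (w : Word G) : Prop :=
  ∃ (a b : Word G) (s : Letter G), w = a ++ s :: b ∧ t.1 ⊂ s.1 ∧ ∀ r ∈ b, LCommute G t r

/-- A word `u` is left-absorbed by `w` if each of its letters is. -/
def LeftAbsorbed (G : SimpleGraph V) (u w : Word G) : Prop :=
  ∀ t ∈ u, LetterLeftAbsorbed G t w

/-- A word `u` is right-absorbed by `w` if each of its letters is. -/
def RightAbsorbed (G : SimpleGraph V) (u w : Word G) : Prop :=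
  ∀ t ∈ u, LetterRightAbsorbed G t w

/-- A word `u` is properly left-absorbed by `w` if each of its letters is. -/
def ProperLeftAbsorbed (G : SimpleGraph V) (u w : Word G) : Prop :=
  ∀ t ∈ u, LetterProperLeftAbsorbed G t w

/-- A word `u` is properly right-absorbed by `w` if each of its letters is. -/
def ProperRightAbsorbed (G : SimpleGraph V) (u w : Word G) : Prop :=
  ∀ t ∈ u, LetterProperRightAbsorbed G t w

/-- A commuting word: its letters pairwise commute. -/
def IsCommuting (G : SimpleGraph V) (u : Word G) : Prop :=
  List.Pairwise (LCommute G) u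

/-- The letter `s` is an end of the word `u` if `u ≈ v·s` for some `v`. -/
def IsEnd (G : SimpleGraph V) (s : Letter G) (u : Word G) : Prop :=
  ∃ v, WEquiv G u (v ++ [s])

/-- `t` is the final segment of `u`: the commuting word consisting of all ends of `u`. -/
def IsFinalSegment (G : SimpleGraph V) (t u : Word G) : Prop :=
  IsCommuting G t ∧ ∀ s, s ∈ t ↔ IsEnd G s u

/-!
Follow a non-splitting reduction of `u·v` while keeping the current word equivalent to
`p·q`, where `u ≈ p·e` and `v ≈ f·q`. A Commutation step preserves this. In an Absorption step
the two letters involved are traced back to `p·q`: if both lay in `p` (or both in `q`), then `u`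
(or `v`) would not be reduced, so one lies in `p` and the other in `q`, and the absorbed letter
commutes with everything separating it from its partner; it can therefore be moved into `e` or
`f`. At the end `p·q ≈ [u·v] ≈ u·x ≈ p·e·x`, and cancelling `p` gives `v ≈ f·q ≈ f·e·x`.
-/

theorem List.append_eq_append_cons_append_cons {α : Type*} {l₁ l₂ a b c : List α} {x y : α}
    (h : l₁ ++ l₂ = a ++ x :: (b ++ y :: c)) :
    (∃ m, a = l₁ ++ m ∧ l₂ = m ++ x :: (b ++ y :: c)) ∨
    (∃ b₁ b₂, b = b₁ ++ b₂ ∧ l₁ = a ++ x :: b₁ ∧ l₂ = b₂ ++ y :: c) ∨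
    (∃ c₁, c = c₁ ++ l₂ ∧ l₁ = a ++ x :: (b ++ y :: c₁)) := by
  rcases List.append_eq_append_iff.mp h with ⟨m, ha, hl₂⟩ | ⟨n, hl₁, hn⟩
  · exact .inl ⟨m, ha, hl₂⟩
  rcases n with _ | ⟨x', n⟩
  · exact .inl ⟨[], by simpa using hl₁.symm, by simpa using hn.symm⟩
  simp only [List.cons_append, List.cons.injEq] at hn
  obtain ⟨rfl, hn⟩ := hn
  rcases List.append_eq_append_iff.mp hn.symm with ⟨b₂, hb, hl₂⟩ | ⟨k, hk, hyc⟩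
  · exact .inr (.inl ⟨n, b₂, hb, hl₁, hl₂⟩)
  rcases k with _ | ⟨y', k⟩
  · exact .inr (.inl ⟨b, [], by simp, by simpa [hk] using hl₁, by simpa using hyc.symm⟩)
  simp only [List.cons_append, List.cons.injEq] at hyc
  obtain ⟨rfl, rfl⟩ := hyc
  exact .inr (.inr ⟨k, rfl, by simp [hl₁, hk]⟩)

section
omit [Fintype V]

variable {G : SimpleGraph V}

theorem LCommute.symm {s t : Letter G} (h : LCommute G s t) : LCommute G t s := by
  rwa [LCommute, Finset.union_comm]

theorem not_lcommute_of_subset {s t : Letter G} (h : s.1 ⊆ t.1) : ¬ LCommute G s t :=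
  fun hst => hst (by rw [Finset.union_eq_right.mpr h]; exact t.2)

theorem LCommute.of_subset_right {r s t : Letter G} (h : LCommute G r t) (hst : s.1 ⊆ t.1) :
    LCommute G r s := by
  intro hrs
  obtain ⟨⟨a, ha⟩⟩ := s.2.nonempty
  have hunion := SimpleGraph.induce_union_connected hrs.preconnected t.2.preconnected
    ⟨a, by simp_all, hst ha⟩
  have : (↑(r.1 ∪ s.1) : Set V) ∪ ↑t.1 = ↑(r.1 ∪ t.1) := by
    rw [Finset.coe_union, Finset.coe_union, Set.union_assoc,
      Set.union_eq_right.mpr (Finset.coe_subset.mpr hst)]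
  exact h (by rwa [IsLetter, ← this])

theorem LCommute.of_subset_left {r s t : Letter G} (h : LCommute G t r) (hst : s.1 ⊆ t.1) :
    LCommute G s r :=
  (h.symm.of_subset_right hst).symm

namespace WEquiv

theorem refl (w : Word G) : WEquiv G w w := Relation.ReflTransGen.refl

theorem trans {a b c : Word G} (h₁ : WEquiv G a b) (h₂ : WEquiv G b c) : WEquiv G a c :=
  Relation.ReflTransGen.trans h₁ h₂

theorem swap {s t : Letter G} (a b : Word G) (h : LCommute G s t) :
    WEquiv G (a ++ s :: t :: b) (a ++ t :: s :: b) :=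
  .single ⟨a, b, s, t, h, rfl, rfl⟩

theorem symm {a b : Word G} (h : WEquiv G a b) : WEquiv G b a := by
  induction h with
  | refl => exact refl _
  | tail _ hstep ih =>
    obtain ⟨α, β, s, t, hst, rfl, rfl⟩ := hstep
    exact (swap α β hst.symm).trans ih

theorem append_left {a b : Word G} (c : Word G) (h : WEquiv G a b) :
    WEquiv G (c ++ a) (c ++ b) := by
  induction h with
  | refl => exact refl _
  | tail _ hstep ih =>
    obtain ⟨α, β, s, t, hst, rfl, rfl⟩ := hstep
    exact ih.trans (by simpa using swap (c ++ α) β hst)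

theorem append_right {a b : Word G} (c : Word G) (h : WEquiv G a b) :
    WEquiv G (a ++ c) (b ++ c) := by
  induction h with
  | refl => exact refl _
  | tail _ hstep ih =>
    obtain ⟨α, β, s, t, hst, rfl, rfl⟩ := hstep
    exact ih.trans (by simpa using swap α (β ++ c) hst)

theorem perm {a b : Word G} (h : WEquiv G a b) : a.Perm b := by
  induction h with
  | refl => rfl
  | tail _ hstep ih =>
    obtain ⟨α, β, s, t, -, rfl, rfl⟩ := hstep
    exact ih.trans (.append_left α (.swap t s β))

theorem cons_append_of_lcommute {s : Letter G} {c : Word G} (hc : ∀ r ∈ c, LCommute G s r)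
    (d : Word G) : WEquiv G (s :: (c ++ d)) (c ++ s :: d) := by
  induction c with
  | nil => exact refl _
  | cons a c ih =>
    exact (swap [] _ (hc a (by simp))).trans
      (append_left [a] (ih fun r hr => hc r (by simp [hr])))

theorem exists_split_of_cons {s : Letter G} {A w : Word G} (h : WEquiv G (s :: A) w) :
    ∃ W₁ W₂, w = W₁ ++ s :: W₂ ∧ (∀ r ∈ W₁, LCommute G s r) ∧ WEquiv G A (W₁ ++ W₂) := by
  induction h with
  | refl => exact ⟨[], A, rfl, by simp, refl A⟩
  | tail _ hstep ih =>
    obtain ⟨W₁, W₂, rfl, hW₁, hA⟩ := ih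
    obtain ⟨α, β, x, y, hxy, hw, rfl⟩ := hstep
    rcases List.append_eq_append_cons_append_cons (b := []) hw with
      ⟨m, rfl, hm⟩ | ⟨b₁, b₂, hb, rfl, hb₂⟩ | ⟨c, rfl, rfl⟩
    · rcases m with _ | ⟨z, m⟩
      · obtain ⟨rfl, rfl⟩ : s = x ∧ W₂ = y :: β := by simpa using hm
        refine ⟨W₁ ++ [y], β, by simp, ?_, by simpa using hA⟩
        simpa [or_imp, forall_and] using ⟨hW₁, hxy⟩
      · obtain ⟨rfl, rfl⟩ : s = z ∧ W₂ = m ++ x :: y :: β := by simpa using hm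
        refine ⟨W₁, m ++ y :: x :: β, by simp, hW₁, ?_⟩
        exact hA.trans (by simpa using swap (W₁ ++ m) β hxy)
    · obtain ⟨rfl, rfl⟩ : b₁ = [] ∧ b₂ = [] := List.append_eq_nil_iff.mp hb.symm
      obtain ⟨rfl, rfl⟩ : s = y ∧ W₂ = β := by simpa using hb₂
      exact ⟨α, x :: W₂, by simp, fun r hr => hW₁ r (by simp [hr]), by simpa using hA⟩
    · refine ⟨α ++ y :: x :: c, W₂, by simp, fun r hr => hW₁ r (by simp at hr ⊢; tauto), ?_⟩
      exact hA.trans (by simpa using swap α (c ++ W₂) hxy)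

theorem append_cancel_left :
    ∀ (z : Word G) {a b : Word G}, WEquiv G (z ++ a) (z ++ b) → WEquiv G a b
  | [], _, _, h => h
  | s :: z, a, b, h => by
    obtain ⟨W₁, W₂, hW, hW₁, hza⟩ := h.exists_split_of_cons
    rcases W₁ with _ | ⟨r, W₁⟩
    · obtain rfl : z ++ b = W₂ := by simpa using hW
      exact append_cancel_left z hza
    · obtain ⟨rfl, -⟩ : s = r ∧ _ := by simpa using hW
      exact absurd (hW₁ s (by simp)) (not_lcommute_of_subset subset_rfl)

theorem exists_split_of_pair {s t : Letter G} (hst : ¬ LCommute G s t) {A B w : Word G}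
    (h : WEquiv G (A ++ s :: t :: B) w) :
    ∃ W Y Z, w = W ++ s :: (Y ++ t :: Z) ∧ (∀ y ∈ Y, LCommute G s y ∨ LCommute G t y) ∧
      WEquiv G (A ++ s :: B) (W ++ s :: (Y ++ Z)) ∧
      WEquiv G (A ++ t :: B) (W ++ Y ++ t :: Z) := by
  induction A generalizing w with
  | nil =>
    obtain ⟨W, W₂, rfl, hW, htB⟩ := h.exists_split_of_cons
    obtain ⟨X₁, X₂, hX, hX₁, hB⟩ := htB.exists_split_of_cons
    obtain ⟨Y, rfl, rfl⟩ : ∃ Y, X₁ = W ++ Y ∧ W₂ = Y ++ t :: X₂ := by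
      rcases List.append_eq_append_iff.mp hX with
        ⟨Y, hX₁W, hW₂⟩ | ⟨_ | ⟨t', n⟩, hW', hW₂⟩
      · exact ⟨Y, hX₁W, hW₂⟩
      · exact ⟨[], by simpa using hW'.symm, by simpa using hW₂.symm⟩
      · obtain ⟨rfl, -⟩ : t = t' ∧ _ := by simpa using hW₂
        exact absurd (hW t (by simp [hW'])) hst
    refine ⟨W, Y, X₂, rfl, fun y hy => .inr (hX₁ y (by simp [hy])), ?_, by simpa using htB⟩
    exact (append_left [s] hB).trans (by simpa using cons_append_of_lcommute hW (Y ++ X₂))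
  | cons a A ih =>
    obtain ⟨W₁, W₂, rfl, hW₁, hA⟩ := h.exists_split_of_cons
    obtain ⟨W, Y, Z, hWYZ, hY, hs, ht⟩ := ih hA
    have move : ∀ c d, (∀ r ∈ c, r ∈ W₁) → WEquiv G (a :: (c ++ d)) (c ++ a :: d) :=
      fun c d hc => cons_append_of_lcommute (fun r hr => hW₁ r (hc r hr)) d
    rcases List.append_eq_append_cons_append_cons hWYZ with
      ⟨m, rfl, rfl⟩ | ⟨Y₁, Y₂, rfl, rfl, rfl⟩ | ⟨Z₁, rfl, rfl⟩
    · refine ⟨W₁ ++ a :: m, Y, Z, by simp, hY, ?_, ?_⟩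
      · simpa using (append_left [a] hs).trans (by simpa using move W₁ _ (by simp))
      · simpa using (append_left [a] ht).trans (by simpa using move W₁ _ (by simp))
    · refine ⟨W, Y₁ ++ a :: Y₂, Z, by simp, ?_, ?_, ?_⟩
      · simp only [List.mem_append, List.mem_cons]
        rintro y (hy | rfl | hy)
        exacts [hY y (by simp [hy]), .inl (hW₁ s (by simp)).symm, hY y (by simp [hy])]
      · simpa using (append_left [a] hs).trans (by simpa using move (W ++ s :: Y₁) _ (by simp))
      · simpa using (append_left [a] ht).trans
          (by simpa using move (W ++ Y₁) _ (by simp; tauto))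
    · refine ⟨W, Y, Z₁ ++ a :: W₂, by simp, hY, ?_, ?_⟩
      · simpa using (append_left [a] hs).trans
          (by simpa using move (W ++ s :: (Y ++ Z₁)) _ (by simp; tauto))
      · simpa using (append_left [a] ht).trans
          (by simpa using move (W ++ Y ++ t :: Z₁) _ (by simp; tauto))

end WEquiv

theorem not_wIsReduced_of_wequiv {s t : Letter G} (hst : s.1 ⊆ t.1 ∨ t.1 ⊆ s.1)
    {A B w : Word G} (h : WEquiv G (A ++ s :: t :: B) w) : ¬ WIsReduced G w := by
  have hc : ¬ LCommute G s t :=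
    hst.elim not_lcommute_of_subset fun hts hc => not_lcommute_of_subset hts hc.symm
  obtain ⟨W, Y, Z, rfl, hY, -, -⟩ := h.exists_split_of_pair hc
  refine fun hw => hw ⟨W, Y, Z, s, t, rfl, ?_⟩
  rcases hst with hst | hts
  · exact .inl ⟨hst, fun y hy => (hY y hy).elim id (·.of_subset_left hst)⟩
  · exact .inr ⟨hts, fun y hy => (hY y hy).elim (·.of_subset_left hts) id⟩

theorem WIsReduced.of_wequiv {w w' : Word G} (hw : WIsReduced G w) (h : WEquiv G w w') :
    WIsReduced G w' := by
  rintro ⟨a, b, c, s, t, rfl, ⟨hst, hb⟩ | ⟨hts, hb⟩⟩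
  · have : WEquiv G (a ++ s :: (b ++ t :: c)) ((a ++ b) ++ s :: t :: c) := by
      simpa using WEquiv.append_left a (WEquiv.cons_append_of_lcommute hb (t :: c))
    exact not_wIsReduced_of_wequiv (.inl hst) (h.trans this).symm hw
  · have : WEquiv G (a ++ s :: (b ++ t :: c)) (a ++ s :: t :: (b ++ c)) := by
      simpa using WEquiv.append_left (a ++ [s]) (WEquiv.cons_append_of_lcommute hb c).symm
    exact not_wIsReduced_of_wequiv (.inr hts) (h.trans this).symm hw

def IsInitialFinalProduct (G : SimpleGraph V) (u v W : Word G) : Prop :=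
  ∃ p q e f, WEquiv G W (p ++ q) ∧ WEquiv G u (p ++ e) ∧ WEquiv G v (f ++ q)

namespace IsInitialFinalProduct

theorem self (u v : Word G) : IsInitialFinalProduct G u v (u ++ v) :=
  ⟨u, v, [], [], .refl _, by simpa using .refl u, by simpa using .refl v⟩

variable {u v : Word G}

theorem absorb_left (hu : WIsReduced G u) (hv : WIsReduced G v) {s t : Letter G}
    (hst : s.1 ⊆ t.1) {A B : Word G} (h : IsInitialFinalProduct G u v (A ++ s :: t :: B)) :
    IsInitialFinalProduct G u v (A ++ t :: B) := by
  obtain ⟨p, q, e, f, hW, hp, hq⟩ := h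
  obtain ⟨W, Y, Z, hpq, hY, -, hres⟩ := hW.exists_split_of_pair (not_lcommute_of_subset hst)
  have hsY : ∀ y ∈ Y, LCommute G s y := fun y hy => (hY y hy).elim id (·.of_subset_left hst)
  rcases List.append_eq_append_cons_append_cons hpq with
    ⟨m, rfl, rfl⟩ | ⟨Y₁, Y₂, rfl, rfl, rfl⟩ | ⟨Z₁, rfl, rfl⟩
  · exact (hv.of_wequiv hq ⟨f ++ m, Y, Z, s, t, by simp, .inl ⟨hst, hsY⟩⟩).elim
  · refine ⟨W ++ Y₁, Y₂ ++ t :: Z, s :: e, f, by simpa using hres, ?_, hq⟩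
    have hsY₁ : ∀ y ∈ Y₁, LCommute G s y := fun y hy => hsY y (by simp [hy])
    exact hp.trans (by simpa using (WEquiv.cons_append_of_lcommute hsY₁ e).append_left W)
  · exact (hu.of_wequiv hp ⟨W, Y, Z₁ ++ e, s, t, by simp, .inl ⟨hst, hsY⟩⟩).elim

theorem absorb_right (hu : WIsReduced G u) (hv : WIsReduced G v) {s t : Letter G}
    (hst : s.1 ⊆ t.1) {A B : Word G} (h : IsInitialFinalProduct G u v (A ++ t :: s :: B)) :
    IsInitialFinalProduct G u v (A ++ t :: B) := by
  obtain ⟨p, q, e, f, hW, hp, hq⟩ := h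
  obtain ⟨W, Y, Z, hpq, hY, hres, -⟩ :=
    hW.exists_split_of_pair fun hc => not_lcommute_of_subset hst hc.symm
  have hsY : ∀ y ∈ Y, LCommute G s y := fun y hy => (hY y hy).elim (·.of_subset_left hst) id
  rcases List.append_eq_append_cons_append_cons hpq with
    ⟨m, rfl, rfl⟩ | ⟨Y₁, Y₂, rfl, rfl, rfl⟩ | ⟨Z₁, rfl, rfl⟩
  · exact (hv.of_wequiv hq ⟨f ++ m, Y, Z, t, s, by simp, .inr ⟨hst, hsY⟩⟩).elim
  · refine ⟨W ++ t :: Y₁, Y₂ ++ Z, e, f ++ [s], by simpa using hres, hp, ?_⟩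
    have hsY₂ : ∀ y ∈ Y₂, LCommute G s y := fun y hy => hsY y (by simp [hy])
    exact hq.trans (by simpa using ((WEquiv.cons_append_of_lcommute hsY₂ Z).symm.append_left f))
  · exact (hu.of_wequiv hp ⟨W, Y, Z₁ ++ e, t, s, by simp, .inr ⟨hst, hsY⟩⟩).elim

theorem of_reflTransGen_nsStep (hu : WIsReduced G u) (hv : WIsReduced G v) {W W' : Word G}
    (hred : Relation.ReflTransGen (NSStep G) W W') (h : IsInitialFinalProduct G u v W) :
    IsInitialFinalProduct G u v W' := by
  induction hred with
  | refl => exact h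
  | tail _ hstep ih =>
    rcases hstep with hswap | ⟨A, B, s, t, hst, rfl | rfl, rfl⟩
    · obtain ⟨p, q, e, f, hW, hp, hq⟩ := ih
      exact ⟨p, q, e, f, (WEquiv.symm (.single hswap)).trans hW, hp, hq⟩
    · exact ih.absorb_left hu hv hst
    · exact ih.absorb_right hu hv hst

end IsInitialFinalProduct

end

theorem reduct_final_subword_general (G : SimpleGraph V) (u v x : Word G)
    (hu : WIsReduced G u) (hv : WIsReduced G v)
    (h : ∃ r, NSRed G (u ++ v) r ∧ WEquiv G r (u ++ x)) :
    (∃ w, WEquiv G v (w ++ x)) ∧ ∀ y : Word G, WCommute G y v → WCommute G y x := by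
  obtain ⟨r, ⟨hred, -⟩, hr⟩ := h
  obtain ⟨p, q, e, f, hpq, hp, hq⟩ :=
    (IsInitialFinalProduct.self u v).of_reflTransGen_nsStep hu hv hred
  have hqx : WEquiv G q (e ++ x) :=
    WEquiv.append_cancel_left p (hpq.symm.trans (hr.trans (by simpa using hp.append_right x)))
  have hv' : WEquiv G v (f ++ e ++ x) := by simpa using hq.trans (hqx.append_left f)
  refine ⟨⟨f ++ e, hv'⟩, fun y hy s hs t ht => hy s hs t ?_⟩
  exact hv'.perm.mem_iff.mpr (by simp [ht])

/-- If reduced words `u`, `v`, `x` satisfy `[u·v] ≈ u·x`, then `x` is a final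
subword of `v`; in particular `x` commutes with every word commuting with `v`. -/
theorem reduct_final_subword (G : SimpleGraph V) (u v x : Word G)
    (hu : WIsReduced G u) (hv : WIsReduced G v) (hx : WIsReduced G x)
    (h : ∃ r, NSRed G (u ++ v) r ∧ WEquiv G r (u ++ x)) :
    (∃ w, WEquiv G v (w ++ x)) ∧ ∀ y : Word G, WCommute G y v → WCommute G y x :=
  reduct_final_subword_general G u v x hu hv h
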